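/- Let τ : (0,1) → ℝ be the inverse of the diffeomorphism μ, and define ρ(z,x) = e^{zτ(x)}τ(x)/(e^{τ(x)}−1) for z ∈ [0,1] and x ∈ (0,1) (with ρ(z,1/2) = 1, the limiting value at τ(1/2) = 0). Then for every x ∈ (0,1): (i) ∫_0^1 ρ(z,x) dz = 1; (ii) ∫_0^1 z ρ(z,x) dz = x; and (iii) ∂_x log ρ(z,x) = τ'(x)(z−x) for every z ∈ [0,1]. -/

import Mathlib

/-!
With `Zₖ(t) = ∫₀¹ sᵏ e^{st} ds` one has `Z₀(t) = (e^t - 1)/t`, so `ρ(z,x) = e^{zτ}/Z₀(τ)` for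
`τ = τ(x)`, uniformly including `τ = 0`. Hence `∫ zᵏ ρ = Zₖ(τ)/Z₀(τ)`, and
`μ = Z₁/Z₀ = (log Z₀)'`, so `∂ₓ log ρ = τ'(x) (z - μ(τ(x))) = τ'(x) (z - x)`.
The inverse `τ` is differentiable because `μ' = (Z₀Z₂ - Z₁²)/Z₀²` is the variance of the
tilted density, positive since `Z₀ (Z₀Z₂ - Z₁²) = ∫₀¹ (sZ₀ - Z₁)² e^{st} ds`.
-/

open Set MeasureTheory

noncomputable section

/-- `μ(τ) = (Todd(τ) − 1)/τ = 1/(1 − e^{−τ}) − 1/τ` for `τ ≠ 0`, `μ(0) = 1/2`. -/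
def toddMu (t : ℝ) : ℝ :=
  if t = 0 then 1 / 2 else 1 / (1 - Real.exp (-t)) - 1 / t

/-- `ρ(z,x) = e^{zτ(x)} τ(x) / (e^{τ(x)} − 1)`, with the limiting value `1` when `τ(x) = 0`
(i.e. at `x = 1/2`). -/
def rhoFun (tau : ℝ → ℝ) (z x : ℝ) : ℝ :=
  if tau x = 0 then 1 else Real.exp (z * tau x) * tau x / (Real.exp (tau x) - 1)

namespace Real

def expMoment (k : ℕ) (t : ℝ) : ℝ := ∫ s in (0:ℝ)..1, s ^ k * exp (s * t)

theorem expMoment_pos (k : ℕ) (t : ℝ) : 0 < expMoment k t :=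
  intervalIntegral.intervalIntegral_pos_of_pos_on
    (Continuous.intervalIntegrable (by fun_prop) _ _)
    (fun s hs => mul_pos (pow_pos hs.1 k) (exp_pos _)) one_pos

@[simp]
theorem expMoment_at_zero (k : ℕ) : expMoment k 0 = 1 / (k + 1) := by
  simp [expMoment, integral_pow]

theorem mul_expMoment_zero (t : ℝ) : t * expMoment 0 t = exp t - 1 := by
  have hderiv (s : ℝ) : HasDerivAt (fun s => exp (s * t)) (t * exp (s * t)) s := by
    simpa [mul_comm] using ((hasDerivAt_id s).mul_const t).exp
  rw [expMoment, ← intervalIntegral.integral_const_mul,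
    intervalIntegral.integral_eq_sub_of_hasDerivAt (fun s _ => by simpa using hderiv s)
      (Continuous.intervalIntegrable (by fun_prop) _ _)]
  simp

theorem mul_expMoment_succ (k : ℕ) (t : ℝ) :
    t * expMoment (k + 1) t = exp t - (k + 1) * expMoment k t := by
  have hderiv (s : ℝ) : HasDerivAt (fun s => s ^ (k + 1) * exp (s * t))
      ((k + 1) * (s ^ k * exp (s * t)) + t * (s ^ (k + 1) * exp (s * t))) s := by
    refine ((hasDerivAt_pow (k + 1) s).mul ((hasDerivAt_id s).mul_const t).exp).congr_deriv ?_
    simp only [id, Nat.add_sub_cancel]; push_cast; ring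
  have hparts : (k + 1) * expMoment k t + t * expMoment (k + 1) t = exp t := by
    rw [expMoment, expMoment, ← intervalIntegral.integral_const_mul,
      ← intervalIntegral.integral_const_mul,
      ← intervalIntegral.integral_add (Continuous.intervalIntegrable (by fun_prop) _ _)
        (Continuous.intervalIntegrable (by fun_prop) _ _),
      intervalIntegral.integral_eq_sub_of_hasDerivAt (fun s _ => hderiv s)
        (Continuous.intervalIntegrable (by fun_prop) _ _)]
    simp
  linarith

theorem expMoment_zero_of_ne_zero {t : ℝ} (ht : t ≠ 0) :
    expMoment 0 t = (exp t - 1) / t := by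
  rw [eq_div_iff ht, mul_comm, mul_expMoment_zero]

theorem hasDerivAt_expMoment (k : ℕ) (t : ℝ) :
    HasDerivAt (expMoment k) (expMoment (k + 1) t) t := by
  have hbound : ∀ s ∈ uIoc (0:ℝ) 1, ∀ x ∈ Metric.ball t 1,
      ‖s ^ (k + 1) * exp (s * x)‖ ≤ exp (|t| + 1) := by
    intro s hs x hx
    rw [uIoc_of_le zero_le_one] at hs
    have hx' : |x| < |t| + 1 := by
      rw [Metric.mem_ball, dist_eq] at hx
      linarith [abs_sub_abs_le_abs_sub x t]
    have hsx : s * x ≤ |t| + 1 := by nlinarith [le_abs_self x, abs_nonneg x, hs.1, hs.2]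
    rw [norm_mul, norm_pow, norm_of_nonneg hs.1.le, norm_of_nonneg (exp_pos _).le]
    exact (mul_le_of_le_one_left (exp_pos _).le (pow_le_one₀ hs.1.le hs.2)).trans
      (exp_le_exp.2 hsx)
  exact (intervalIntegral.hasDerivAt_integral_of_dominated_loc_of_deriv_le
    (F' := fun x s => s ^ (k + 1) * exp (s * x))
    (Metric.ball_mem_nhds t one_pos) (.of_forall fun _ => by fun_prop)
    (Continuous.intervalIntegrable (by fun_prop) _ _) (by fun_prop)
    (.of_forall hbound) intervalIntegrable_const
    (.of_forall fun s _ x _ => by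
      refine ((((hasDerivAt_id x).const_mul s).exp).const_mul (s ^ k)).congr_deriv ?_
      simp only [id, pow_succ]; ring)).2

theorem sq_expMoment_one_lt_mul (t : ℝ) :
    expMoment 1 t ^ 2 < expMoment 0 t * expMoment 2 t := by
  set m₀ := expMoment 0 t
  set m₁ := expMoment 1 t
  have hcont : Continuous fun s => (s * m₀ - m₁) ^ 2 * exp (s * t) := by fun_prop
  have hexpand : ∫ s in (0:ℝ)..1, (s * m₀ - m₁) ^ 2 * exp (s * t)
      = m₀ * (m₀ * expMoment 2 t - m₁ ^ 2) := by
    have hint (k : ℕ) : IntervalIntegrable (fun s => s ^ k * exp (s * t)) volume 0 1 :=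
      Continuous.intervalIntegrable (by fun_prop) _ _
    have : ∫ s in (0:ℝ)..1, (s * m₀ - m₁) ^ 2 * exp (s * t)
        = ∫ s in (0:ℝ)..1, (m₀ ^ 2 * (s ^ 2 * exp (s * t)) - 2 * m₀ * m₁ * (s ^ 1 * exp (s * t))
          + m₁ ^ 2 * (s ^ 0 * exp (s * t))) := by
      congr 1; ext s; ring
    rw [this, intervalIntegral.integral_add ((hint 2).const_mul _ |>.sub ((hint 1).const_mul _))
      ((hint 0).const_mul _), intervalIntegral.integral_sub ((hint 2).const_mul _)
      ((hint 1).const_mul _)]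
    simp only [intervalIntegral.integral_const_mul]
    change m₀ ^ 2 * expMoment 2 t - 2 * m₀ * m₁ * m₁ + m₁ ^ 2 * m₀ = _
    ring
  have hpos : 0 < ∫ s in (0:ℝ)..1, (s * m₀ - m₁) ^ 2 * exp (s * t) := by
    have := intervalIntegral.integral_lt_integral_of_continuousOn_of_le_of_exists_lt one_pos
      continuousOn_const hcont.continuousOn (fun s _ => by positivity)
      ⟨0, ⟨le_rfl, zero_le_one⟩, by simpa using pow_pos (expMoment_pos 1 t) 2⟩
    simpa using this
  rw [hexpand] at hpos
  nlinarith [expMoment_pos 0 t]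

end Real

open Real Topology Filter

theorem StrictMono.continuousAt_of_eventually_rightInverse {α β : Type*} [LinearOrder α]
    [TopologicalSpace α] [OrderTopology α] [LinearOrder β] [TopologicalSpace β]
    [OrderTopology β] {f : α → β} {g : β → α} (hf : StrictMono f) {x : β}
    (hg : ∀ᶠ y in 𝓝 x, f (g y) = y) : ContinuousAt g x := by
  have hx : f (g x) = x := hg.self_of_nhds
  refine tendsto_order.2 ⟨fun a ha => ?_, fun a ha => ?_⟩
  · filter_upwards [hg, Ioi_mem_nhds (hx ▸ hf ha)] with y hy hya
    exact hf.lt_iff_lt.1 (hy.symm ▸ hya : f a < f (g y))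
  · filter_upwards [hg, Iio_mem_nhds (hx ▸ hf ha)] with y hy hya
    exact hf.lt_iff_lt.1 (hy.symm ▸ hya : f (g y) < f a)

theorem toddMu_eq_expMoment_div (t : ℝ) : toddMu t = expMoment 1 t / expMoment 0 t := by
  rcases eq_or_ne t 0 with rfl | ht
  · norm_num [toddMu]
  have hexp : exp t - 1 ≠ 0 := sub_ne_zero.2 (by simpa using ht)
  have h₁ : expMoment 1 t = (exp t - expMoment 0 t) / t := by
    rw [eq_div_iff ht, mul_comm, mul_expMoment_succ]; simp
  rw [h₁, expMoment_zero_of_ne_zero ht, toddMu, if_neg ht, exp_neg]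
  field_simp

theorem hasDerivAt_log_expMoment_zero (t : ℝ) :
    HasDerivAt (fun t => log (expMoment 0 t)) (toddMu t) t := by
  simpa [toddMu_eq_expMoment_div] using (hasDerivAt_expMoment 0 t).log (expMoment_pos 0 t).ne'

theorem hasDerivAt_toddMu (t : ℝ) :
    HasDerivAt toddMu ((expMoment 0 t * expMoment 2 t - expMoment 1 t ^ 2) / expMoment 0 t ^ 2)
      t := by
  have := (hasDerivAt_expMoment 1 t).div (hasDerivAt_expMoment 0 t) (expMoment_pos 0 t).ne'
  rw [funext toddMu_eq_expMoment_div]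
  exact this.congr_deriv (by ring)

theorem exists_hasDerivAt_toddMu_pos (t : ℝ) : ∃ d, 0 < d ∧ HasDerivAt toddMu d t :=
  ⟨_, div_pos (sub_pos.2 (sq_expMoment_one_lt_mul t)) (pow_pos (expMoment_pos 0 t) 2),
    hasDerivAt_toddMu t⟩

theorem toddMu_strictMono : StrictMono toddMu :=
  strictMono_of_deriv_pos fun t => by
    obtain ⟨d, hd, hderiv⟩ := exists_hasDerivAt_toddMu_pos t
    rwa [hderiv.deriv]

theorem differentiableAt_of_toddMu_rightInverse {tau : ℝ → ℝ} {x : ℝ}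
    (htau : ∀ᶠ y in 𝓝 x, toddMu (tau y) = y) : DifferentiableAt ℝ tau x := by
  obtain ⟨d, hd, hderiv⟩ := exists_hasDerivAt_toddMu_pos (tau x)
  exact (hderiv.of_local_left_inverse
    (toddMu_strictMono.continuousAt_of_eventually_rightInverse htau) hd.ne' htau).differentiableAt

theorem rhoFun_eq (tau : ℝ → ℝ) (z x : ℝ) :
    rhoFun tau z x = exp (z * tau x) / expMoment 0 (tau x) := by
  rcases eq_or_ne (tau x) 0 with ht | ht
  · simp [rhoFun, ht]
  have hexp : exp (tau x) - 1 ≠ 0 := sub_ne_zero.2 (by simpa using ht)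
  rw [rhoFun, if_neg ht, expMoment_zero_of_ne_zero ht]
  field_simp

theorem integral_pow_mul_rhoFun (tau : ℝ → ℝ) (k : ℕ) (x : ℝ) :
    ∫ z in (0:ℝ)..1, z ^ k * rhoFun tau z x = expMoment k (tau x) / expMoment 0 (tau x) := by
  simp only [rhoFun_eq, ← mul_div_assoc, intervalIntegral.integral_div, expMoment]

theorem hasDerivAt_log_rhoFun {tau : ℝ → ℝ} {tau' x : ℝ} (htau : HasDerivAt tau tau' x)
    (z : ℝ) :
    HasDerivAt (fun y => log (rhoFun tau z y)) (tau' * (z - toddMu (tau x))) x := by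
  have hlog (y : ℝ) : log (rhoFun tau z y) = z * tau y - log (expMoment 0 (tau y)) := by
    rw [rhoFun_eq, log_div (exp_ne_zero _) (expMoment_pos 0 _).ne', log_exp]
  simp only [hlog]
  exact ((htau.const_mul z).sub ((hasDerivAt_log_expMoment_zero _).comp x htau)).congr_deriv
    (by ring)

theorem rhoFun_properties_general
    (tau : ℝ → ℝ)
    (htau₂ : ∀ x ∈ Set.Ioo (0:ℝ) 1, toddMu (tau x) = x) :
    ∀ x ∈ Set.Ioo (0:ℝ) 1,
      (∫ z in (0:ℝ)..1, rhoFun tau z x) = 1 ∧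
      (∫ z in (0:ℝ)..1, z * rhoFun tau z x) = x ∧
      (∀ z ∈ Set.Icc (0:ℝ) 1,
        deriv (fun y => Real.log (rhoFun tau z y)) x = deriv tau x * (z - x)) := by
  intro x hx
  have hx_eq : toddMu (tau x) = x := htau₂ x hx
  have htau : DifferentiableAt ℝ tau x :=
    differentiableAt_of_toddMu_rightInverse
      (eventually_of_mem (isOpen_Ioo.mem_nhds hx) htau₂)
  refine ⟨?_, ?_, fun z _ => ?_⟩
  · simpa [div_self (expMoment_pos 0 (tau x)).ne'] using integral_pow_mul_rhoFun tau 0 x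
  · simpa [← toddMu_eq_expMoment_div, hx_eq] using integral_pow_mul_rhoFun tau 1 x
  · rw [(hasDerivAt_log_rhoFun htau.hasDerivAt z).deriv, hx_eq]

/-- With `τ : (0,1) → ℝ` the inverse of `μ`, the density `ρ(·,x)` is a
probability density on `[0,1]` with barycenter `x`, and `∂_x log ρ(z,x) = τ'(x)(z−x)`. -/
theorem rhoFun_properties
    (tau : ℝ → ℝ)
    (htau₁ : ∀ t : ℝ, tau (toddMu t) = t)
    (htau₂ : ∀ x ∈ Set.Ioo (0:ℝ) 1, toddMu (tau x) = x) :
    ∀ x ∈ Set.Ioo (0:ℝ) 1,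
      (∫ z in (0:ℝ)..1, rhoFun tau z x) = 1 ∧
      (∫ z in (0:ℝ)..1, z * rhoFun tau z x) = x ∧
      (∀ z ∈ Set.Icc (0:ℝ) 1,
        deriv (fun y => Real.log (rhoFun tau z y)) x = deriv tau x * (z - x)) :=
  rhoFun_properties_general tau htau₂

end
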